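/- For every natural number M ≥ 1 and every complex number x with sinh(x) ≠ 0 and cosh(x) ≠ 0, one has cosh(x)/sinh(x)^{4M−1} = −sinh(x)/cosh(x)^{4M−1} + ∑_{k=0}^{M} 2^{2(M+k)} (M/(M+k)) C(M+k, 2k) · 1/sinh(2x)^{2(M+k)−1}. -/

import Mathlib

/-!
Put `a = cosh² x` and `b = -sinh² x`, so that `a + b = 1` and `q := -ab = (sinh x cosh x)²`.
The power sums `aⁿ + bⁿ` satisfy `p (n + 2) = p (n + 1) + q p n`, as do the Fibonacci polynomials
`F n q = ∑_{i+j=n} C(i,j) qʲ`; comparing initial values gives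
`cosh⁴ᴹ x + sinh⁴ᴹ x = F (2M) q + q F (2M - 2) q`. The coefficient of `q^(M-k)` there is
`C(M+k, 2k) + C(M+k-1, 2k) = 2M/(M+k) · C(M+k, 2k)`, and dividing by `(sinh x cosh x)^(4M-1)`
gives the identity, since `sinh 2x = 2 sinh x cosh x`.
-/

open Finset

variable {R : Type*}

/-- At `q = 1` this is `Nat.fib (n + 1)`, by `Nat.fib_succ_eq_sum_choose`. -/
def fibPoly [CommSemiring R] (n : ℕ) (q : R) : R :=
  ∑ p ∈ antidiagonal n, (p.1.choose p.2 : R) * q ^ p.2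

theorem fibPoly_zero [CommSemiring R] (q : R) : fibPoly 0 q = 1 := by
  simp [fibPoly]

theorem fibPoly_one [CommSemiring R] (q : R) : fibPoly 1 q = 1 := by
  simp [fibPoly, Nat.antidiagonal_succ]

theorem fibPoly_add_two [CommSemiring R] (n : ℕ) (q : R) :
    fibPoly (n + 2) q = fibPoly (n + 1) q + q * fibPoly n q := by
  simp only [fibPoly, Nat.antidiagonal_succ_succ', Nat.antidiagonal_succ', sum_cons, sum_map,
    Function.Embedding.coe_prodMap, Function.Embedding.coeFn_mk, Prod.map_fst, Prod.map_snd,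
    Nat.succ_eq_add_one, Nat.choose_succ_succ, Nat.cast_add, add_mul, sum_add_distrib, mul_sum]
  simp only [Nat.choose_zero_succ, Nat.choose_zero_right, Function.Embedding.refl_apply,
    Nat.cast_zero, Nat.cast_one, zero_mul, pow_zero, mul_one, pow_succ', mul_left_comm]
  ring

theorem fibPoly_two_mul [CommSemiring R] (m : ℕ) (q : R) :
    fibPoly (2 * m) q = ∑ k ∈ range (m + 1), ((m + k).choose (2 * k) : R) * q ^ (m - k) := by
  refine (sum_of_injOn (fun k ↦ (m + k, m - k)) ?_ ?_ ?_ ?_).symm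
  · intro i _ j _ h
    simpa using congrArg Prod.fst h
  · intro k hk
    simp only [coe_range, Set.mem_Iio] at hk
    simp only [mem_coe, HasAntidiagonal.mem_antidiagonal]
    omega
  · rintro ⟨i, j⟩ hij hnot
    simp only [HasAntidiagonal.mem_antidiagonal] at hij
    have hlt : i < j := by
      by_contra! hle
      refine hnot ⟨i - m, by simp only [coe_range, Set.mem_Iio]; omega, ?_⟩
      exact Prod.ext (by dsimp only; omega) (by dsimp only; omega)
    simp [Nat.choose_eq_zero_of_lt hlt]
  · intro k hk
    simp only [mem_range] at hk
    rw [Nat.choose_symm_of_eq_add (by omega : m + k = 2 * k + (m - k))]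

theorem pow_add_pow_eq_fibPoly [CommRing R] {a b : R} (h : a + b = 1) (n : ℕ) :
    a ^ (n + 2) + b ^ (n + 2) = fibPoly (n + 2) (-(a * b)) + -(a * b) * fibPoly n (-(a * b)) := by
  induction n using Nat.twoStepInduction with
  | zero =>
    rw [fibPoly_add_two, fibPoly_one, fibPoly_zero]
    linear_combination (a + b + 1) * h
  | one =>
    rw [fibPoly_add_two, fibPoly_add_two, fibPoly_one, fibPoly_zero]
    linear_combination (a ^ 2 + b ^ 2 - a * b + a + b + 1) * h
  | more n ih₁ ih₂ =>
    linear_combination (a ^ (n + 3) + b ^ (n + 3)) * h + ih₂ - a * b * ih₁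
      - fibPoly_add_two (n + 2) (-(a * b)) + a * b * fibPoly_add_two n (-(a * b))

theorem Nat.succ_mul_choose_add_choose (n r : ℕ) :
    (n + 1) * ((n + 1).choose r + n.choose r) = (2 * (n + 1) - r) * (n + 1).choose r := by
  have h := Nat.choose_mul_succ_eq n r
  rcases le_or_gt r (n + 1) with hr | hr
  · rw [show 2 * (n + 1) - r = (n + 1) + (n + 1 - r) by omega, add_mul (n + 1) (n + 1 - r),
      mul_comm (n + 1 - r), ← h]
    ring
  · simp [Nat.choose_eq_zero_of_lt hr, Nat.choose_eq_zero_of_lt (by omega : n < r)]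

theorem pow_four_mul_add_pow_four_mul [CommRing R] {c s : R} (h : c ^ 2 - s ^ 2 = 1) {M : ℕ}
    (hM : 0 < M) :
    c ^ (4 * M) + s ^ (4 * M) =
      ∑ k ∈ range (M + 1), (((M + k).choose (2 * k) + (M - 1 + k).choose (2 * k) : ℕ) : R) *
        (s * c) ^ (2 * (M - k)) := by
  obtain ⟨m, rfl⟩ : ∃ m, M = m + 1 := ⟨M - 1, by omega⟩
  have key :=
    pow_add_pow_eq_fibPoly (a := c ^ 2) (b := -s ^ 2) (by rw [← h, sub_eq_add_neg]) (2 * m)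
  rw [show -(c ^ 2 * -s ^ 2) = (s * c) ^ 2 by ring, show 2 * m + 2 = 2 * (m + 1) by ring,
    fibPoly_two_mul, fibPoly_two_mul, ← pow_mul, Even.neg_pow ⟨m + 1, by ring⟩, ← pow_mul] at key
  rw [show 4 * (m + 1) = 2 * (2 * (m + 1)) by ring, key, Nat.add_sub_cancel]
  simp only [Nat.cast_add, add_mul, sum_add_distrib, ← pow_mul]
  congr 1
  rw [sum_range_succ _ (m + 1), Nat.choose_eq_zero_of_lt (by omega : m + (m + 1) < 2 * (m + 1)),
    Nat.cast_zero, zero_mul, add_zero, mul_sum]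
  refine sum_congr rfl fun k hk ↦ ?_
  rw [mem_range] at hk
  rw [show 2 * (m + 1 - k) = 2 + 2 * (m - k) by omega, pow_add, pow_mul]
  ring

theorem choose_add_choose_mul_pow_div_pow {K : Type*} [Field K] [CharZero K] {x : K} (hx : x ≠ 0)
    {M k : ℕ} (hM : 0 < M) (hk : k ≤ M) :
    (((M + k).choose (2 * k) + (M - 1 + k).choose (2 * k) : ℕ) : K) * x ^ (2 * (M - k)) /
        x ^ (4 * M - 1) =
      2 ^ (2 * (M + k)) * ((M : K) / (M + k)) * ((M + k).choose (2 * k) : K) *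
        (1 / (2 * x) ^ (2 * (M + k) - 1)) := by
  have hcoef : (M + k) * ((M + k).choose (2 * k) + (M - 1 + k).choose (2 * k)) =
      2 * M * (M + k).choose (2 * k) := by
    have h := Nat.succ_mul_choose_add_choose (M - 1 + k) (2 * k)
    rwa [show M - 1 + k + 1 = M + k by omega, show 2 * (M + k) - 2 * k = 2 * M by omega] at h
  obtain ⟨N, hN⟩ : ∃ N, 2 * (M + k) = N + 1 := ⟨2 * (M + k) - 1, by omega⟩
  rw [show 4 * M - 1 = 2 * (M - k) + N by omega, hN, Nat.add_sub_cancel, pow_add, mul_pow,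
    pow_succ]
  have hMk : (M : K) + k ≠ 0 := by exact_mod_cast (by omega : M + k ≠ 0)
  field_simp
  have hcoefK := congrArg (Nat.cast (R := K)) hcoef
  push_cast at hcoefK ⊢
  linear_combination hcoefK

theorem div_pow_add_div_pow {K : Type*} [Field K] {c s : K} (hc : c ≠ 0) (hs : s ≠ 0) (n : ℕ) :
    s / c ^ n + c / s ^ n = (c ^ (n + 1) + s ^ (n + 1)) / (s * c) ^ n := by
  field_simp
  ring

theorem stmt_8 (M : ℕ) (hM : 1 ≤ M) (x : ℂ) (hs : Complex.sinh x ≠ 0)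
    (hc : Complex.cosh x ≠ 0) :
    Complex.cosh x / Complex.sinh x ^ (4 * M - 1)
    = -(Complex.sinh x / Complex.cosh x ^ (4 * M - 1)) +
      ∑ k ∈ Finset.range (M + 1),
        2 ^ (2 * (M + k)) * ((M : ℂ) / (M + k)) * ((M + k).choose (2 * k)) *
          (1 / Complex.sinh (2 * x) ^ (2 * (M + k) - 1)) := by
  rw [eq_neg_add_iff_add_eq, div_pow_add_div_pow hc hs, Nat.sub_add_cancel (by omega),
    pow_four_mul_add_pow_four_mul (Complex.cosh_sq_sub_sinh_sq x) hM, sum_div,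
    Complex.sinh_two_mul, mul_assoc (2 : ℂ)]
  exact sum_congr rfl fun k hk ↦ choose_add_choose_mul_pow_div_pow (mul_ne_zero hs hc) hM
    (Nat.lt_succ_iff.mp (mem_range.mp hk))
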